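/- arXiv:1401.1099 — 3 statements merged into one kernel-verified Lean document; each statement's English description precedes it below -/
import Mathlib

section
/- Let u be harmonic on the open disk of radius R centered at z₀ in ℂ with |u| ≤ M. Then the partial derivatives of u at z₀ are bounded: |∂u/∂x(z₀)| ≤ 2M/R and |∂u/∂y(z₀)| ≤ 2M/R (more generally, bounded by a constant depending only on M and the distance of z₀ to the boundary). -/
open Complex Metric intervalIntegral MeasureTheory

/-- A real-valued function on `ℂ` is harmonic on a set if it is `C²` there and its
Laplacian (sum of the two repeated directional derivatives along `1` and `I`) vanishes. -/
def HarmonicOnSet (u : ℂ → ℝ) (U : Set ℂ) : Prop :=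
  ContDiffOn ℝ 2 u U ∧
  ∀ z ∈ U, fderiv ℝ (fun w => fderiv ℝ u w 1) z 1
    + fderiv ℝ (fun w => fderiv ℝ u w Complex.I) z Complex.I = 0

private lemma conj_intervalIntegral {f : ℝ → ℂ} {a b : ℝ} :
    (∫ x in a..b, (starRingEnd ℂ) (f x)) = (starRingEnd ℂ) (∫ x in a..b, f x) := by
  simp [intervalIntegral, ← integral_conj]

theorem stmt6 (u : ℂ → ℝ) (z₀ : ℂ) (R M : ℝ) (hR : 0 < R)
    (hu : HarmonicOnSet u (Metric.ball z₀ R))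
    (hM : ∀ z ∈ Metric.ball z₀ R, |u z| ≤ M) :
    |fderiv ℝ u z₀ 1| ≤ 2 * M / R ∧ |fderiv ℝ u z₀ Complex.I| ≤ 2 * M / R := by
  obtain ⟨hC2, hLap⟩ := hu
  have hUo : IsOpen (Metric.ball z₀ R) := Metric.isOpen_ball
  have hdu : ∀ y ∈ Metric.ball z₀ R, DifferentiableAt ℝ u y := fun y hy =>
    (hC2.contDiffAt (hUo.mem_nhds hy)).differentiableAt two_ne_zero
  have hC1 : ContDiffOn ℝ 1 (fderiv ℝ u) (Metric.ball z₀ R) :=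
    hC2.fderiv_of_isOpen hUo (by norm_num)
  set g : ℂ → ℂ := fun w => (fderiv ℝ u w 1 : ℂ) - Complex.I * (fderiv ℝ u w Complex.I) with hg
  -- `g` is holomorphic on the ball (Cauchy–Riemann equations)
  have hgd : ∀ z ∈ Metric.ball z₀ R, DifferentiableAt ℂ g z := by
    intro z hz
    have hf'' : HasFDerivAt (fderiv ℝ u) (fderiv ℝ (fderiv ℝ u) z) z :=
      (((hC1.contDiffAt (hUo.mem_nhds hz)).differentiableAt one_ne_zero)).hasFDerivAt
    set f'' := fderiv ℝ (fderiv ℝ u) z with hf''def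
    have heval : ∀ v : ℂ, HasFDerivAt (fun w => fderiv ℝ u w v)
        ((ContinuousLinearMap.apply ℝ ℝ v).comp f'') z := fun v =>
      ((ContinuousLinearMap.apply ℝ ℝ v).hasFDerivAt).comp z hf''
    have hsymm : ∀ v w : ℂ, f'' v w = f'' w v := by
      intro v w
      apply second_derivative_symmetric_of_eventually (f := u) ?_ hf''
      filter_upwards [hUo.mem_nhds hz] with y hy using (hdu y hy).hasFDerivAt
    have hlapz : f'' 1 1 + f'' Complex.I Complex.I = 0 := by
      have h1 := (heval 1).fderiv
      have h2 := (heval Complex.I).fderiv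
      have := hLap z hz
      rw [h1, h2] at this
      simpa using this
    have hgR : HasFDerivAt g
        (Complex.ofRealCLM.comp ((ContinuousLinearMap.apply ℝ ℝ (1:ℂ)).comp f'')
          - Complex.I • (Complex.ofRealCLM.comp
              ((ContinuousLinearMap.apply ℝ ℝ Complex.I).comp f''))) z := by
      exact (Complex.ofRealCLM.hasFDerivAt.comp z (heval 1)).sub
        ((Complex.ofRealCLM.hasFDerivAt.comp z (heval Complex.I)).const_mul Complex.I)
    set m : ℂ := (f'' 1 1 : ℂ) - Complex.I * (f'' 1 Complex.I) with hm
    refine ⟨(1 : ℂ →L[ℂ] ℂ).smulRight m, hasFDerivAt_of_restrictScalars ℝ hgR ?_⟩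
    ext w
    have hw : w = w.re • (1:ℂ) + w.im • Complex.I := by
      simp [Complex.real_smul, Complex.re_add_im]
    simp only [ContinuousLinearMap.coe_restrictScalars', ContinuousLinearMap.smulRight_apply,
      ContinuousLinearMap.one_apply, ContinuousLinearMap.sub_apply, ContinuousLinearMap.coe_comp',
      Function.comp_apply, ContinuousLinearMap.smul_apply, Complex.ofRealCLM_apply,
      ContinuousLinearMap.apply_apply, smul_eq_mul]
    rw [hw, map_add, _root_.map_smul, _root_.map_smul]
    simp only [ContinuousLinearMap.add_apply, ContinuousLinearMap.smul_apply, smul_eq_mul]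
    rw [hsymm Complex.I 1, show f'' Complex.I Complex.I = -(f'' 1 1) from by linarith [hlapz]]
    simp only [Complex.real_smul]
    push_cast
    linear_combination (-(w.im:ℂ) * ((f'' 1) Complex.I : ℝ)) * Complex.I_sq
  -- directional derivatives of `u` in terms of `g`
  have hre : ∀ z ∈ Metric.ball z₀ R, ∀ v : ℂ, fderiv ℝ u z v = (g z * v).re := by
    intro z hz v
    have hv : v = v.re • (1:ℂ) + v.im • Complex.I := by
      simp [Complex.real_smul, Complex.re_add_im]
    conv_lhs => rw [hv]
    rw [map_add, _root_.map_smul, _root_.map_smul]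
    simp only [hg, smul_eq_mul, Complex.mul_re, Complex.sub_re, Complex.ofReal_re,
      Complex.mul_im, Complex.sub_im, Complex.ofReal_im, Complex.I_re, Complex.I_im]
    ring
  -- main estimate on circles of radius r < R
  have main : ∀ r : ℝ, 0 < r → r < R → ‖g z₀‖ ≤ 2 * M / r := by
    intro r hr hrR
    have hsub : closedBall z₀ r ⊆ Metric.ball z₀ R := closedBall_subset_ball hrR
    have hmem : ∀ θ : ℝ, circleMap z₀ r θ ∈ Metric.ball z₀ R := fun θ =>
      hsub (circleMap_mem_closedBall z₀ hr.le θ)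
    have hgU : DifferentiableOn ℂ g (closedBall z₀ r) := fun x hx =>
      (hgd x (hsub hx)).differentiableWithinAt
    -- mean value property for g
    have C1 := hgU.circleIntegral_sub_inv_smul (mem_ball_self hr)
    rw [circleIntegral] at C1
    simp only [deriv_circleMap, circleMap_sub_center, smul_eq_mul] at C1
    have C1' : (∫ θ in (0:ℝ)..(2*Real.pi), Complex.I * g (circleMap z₀ r θ))
        = 2*Real.pi*Complex.I*(g z₀) := by
      rw [← C1]
      · apply intervalIntegral.integral_congr
        intro θ _
        have hne : circleMap 0 r θ ≠ 0 := circleMap_ne_center hr.ne'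
        field_simp
    have E1 : (∫ θ in (0:ℝ)..(2*Real.pi), g (circleMap z₀ r θ)) = 2*Real.pi*(g z₀) := by
      apply mul_left_cancel₀ Complex.I_ne_zero
      rw [← intervalIntegral.integral_const_mul, C1']
      ring
    -- vanishing second moment
    have hhU : DifferentiableOn ℂ (fun z => (z - z₀)^2 * g z) (closedBall z₀ r) :=
      (((differentiable_id.sub_const z₀).pow 2).differentiableOn).mul hgU
    have C2 := hhU.circleIntegral_sub_inv_smul (mem_ball_self hr)
    rw [circleIntegral] at C2
    simp only [deriv_circleMap, circleMap_sub_center, smul_eq_mul, sub_self] at C2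
    have C2'' : (∫ θ in (0:ℝ)..(2*Real.pi), circleMap 0 r θ * Complex.I *
        ((circleMap 0 r θ)⁻¹ * ((circleMap 0 r θ)^2 * g (circleMap z₀ r θ)))) = 0 := by
      rw [C2]; ring
    have C2' : (∫ θ in (0:ℝ)..(2*Real.pi),
        Complex.I * ((circleMap 0 r θ)^2 * g (circleMap z₀ r θ))) = 0 := by
      refine Eq.trans (intervalIntegral.integral_congr fun θ _ => ?_) C2''
      have hne : circleMap 0 r θ ≠ 0 := circleMap_ne_center hr.ne'
      field_simp
    have E2 : (∫ θ in (0:ℝ)..(2*Real.pi),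
        (circleMap 0 r θ)^2 * g (circleMap z₀ r θ)) = 0 := by
      apply mul_left_cancel₀ Complex.I_ne_zero
      rw [← intervalIntegral.integral_const_mul, C2']
      ring
    -- integration by parts identity
    set e : ℝ → ℂ := fun θ => Complex.exp (-(θ:ℂ) * Complex.I) with he
    set d : ℝ → ℝ := fun θ => fderiv ℝ u (circleMap z₀ r θ) (circleMap 0 r θ * Complex.I) with hd
    have hF : ∀ θ : ℝ, HasDerivAt (fun t => (u (circleMap z₀ r t) : ℂ) * (Complex.I * e t))
        ((d θ : ℂ) * (Complex.I * e θ)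
          + (u (circleMap z₀ r θ) : ℂ) * (Complex.I * (e θ * (-1 * Complex.I)))) θ := by
      intro θ
      have h1 : HasDerivAt (fun t : ℝ => (u (circleMap z₀ r t) : ℂ)) ((d θ : ℝ) : ℂ) θ := by
        exact ((hdu _ (hmem θ)).hasFDerivAt.comp_hasDerivAt θ
          (hasDerivAt_circleMap z₀ r θ)).ofReal_comp
      have h2 : HasDerivAt (fun t : ℝ => Complex.I * e t)
          (Complex.I * (e θ * (-1 * Complex.I))) θ := by
        have hc : HasDerivAt (fun z : ℂ => Complex.exp (-z * Complex.I))
            (Complex.exp (-(θ:ℂ) * Complex.I) * (-1 * Complex.I)) (θ:ℂ) := by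
          simpa [Function.comp_def] using (Complex.hasDerivAt_exp (-(θ:ℂ) * Complex.I)).comp (θ:ℂ)
            (((hasDerivAt_id ((θ:ℂ))).neg).mul_const Complex.I)
        exact (hc.comp_ofReal).const_mul Complex.I
      simpa [Pi.mul_def] using h1.mul h2
    -- continuity facts
    have hcontg : Continuous fun θ : ℝ => g (circleMap z₀ r θ) :=
      continuous_iff_continuousAt.2 fun θ =>
        ((hgd _ (hmem θ)).continuousAt).comp (continuous_circleMap z₀ r).continuousAt
    have hcontu : Continuous fun θ : ℝ => u (circleMap z₀ r θ) :=
      hC2.continuousOn.comp_continuous (continuous_circleMap z₀ r) hmem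
    have hcontd : Continuous d := by
      have hfd : Continuous fun θ : ℝ => fderiv ℝ u (circleMap z₀ r θ) :=
        hC1.continuousOn.comp_continuous (continuous_circleMap z₀ r) hmem
      exact hfd.clm_apply ((continuous_circleMap 0 r).mul continuous_const)
    have hconte : Continuous e := (Complex.continuous_ofReal.neg.mul continuous_const).cexp
    have hintA : IntervalIntegrable (fun θ : ℝ => (d θ : ℂ) * (Complex.I * e θ))
        volume 0 (2*Real.pi) :=
      ((Complex.continuous_ofReal.comp hcontd).mul (continuous_const.mul hconte)).intervalIntegrable _ _
    have hintB : IntervalIntegrable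
        (fun θ : ℝ => (u (circleMap z₀ r θ) : ℂ) * (Complex.I * (e θ * (-1 * Complex.I))))
        volume 0 (2*Real.pi) :=
      ((Complex.continuous_ofReal.comp hcontu).mul
        (continuous_const.mul (hconte.mul continuous_const))).intervalIntegrable _ _
    have hFTC := intervalIntegral.integral_eq_sub_of_hasDerivAt (f := fun t =>
        (u (circleMap z₀ r t) : ℂ) * (Complex.I * e t))
        (fun θ _ => hF θ) (hintA.add hintB)
    have hzero : (∫ θ in (0:ℝ)..(2*Real.pi), ((d θ : ℂ) * (Complex.I * e θ)
        + (u (circleMap z₀ r θ) : ℂ) * (Complex.I * (e θ * (-1 * Complex.I))))) = 0 := by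
      rw [hFTC]
      have hper : circleMap z₀ r (2*Real.pi) = circleMap z₀ r 0 := by
        simpa using periodic_circleMap z₀ r 0
      have he2π : e (2*Real.pi) = 1 := by
        simp only [he]
        rw [show -((2*Real.pi : ℝ):ℂ) * Complex.I = -(2*Real.pi*Complex.I) by push_cast; ring,
          Complex.exp_neg, Complex.exp_two_pi_mul_I, inv_one]
      have he0 : e 0 = 1 := by simp [he]
      simp only [hper, he2π, he0]
      ring
    rw [intervalIntegral.integral_add hintA hintB] at hzero
    -- rewrite the integral of A
    have EA : (∫ θ in (0:ℝ)..(2*Real.pi), (d θ : ℂ) * (Complex.I * e θ))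
        = -(Real.pi * r : ℝ) * g z₀ := by
      have hpt : ∀ θ : ℝ, (d θ : ℂ) * (Complex.I * e θ)
          = -((r:ℂ)/2) * g (circleMap z₀ r θ)
            + ((1:ℂ)/(2*r)) * (starRingEnd ℂ) ((circleMap 0 r θ)^2 * g (circleMap z₀ r θ)) := by
        intro θ
        have hdre : d θ = (g (circleMap z₀ r θ) * (circleMap 0 r θ * Complex.I)).re :=
          hre _ (hmem θ) _
        have haddconj := Complex.add_conj (g (circleMap z₀ r θ) * (circleMap 0 r θ * Complex.I))
        have hdC : (d θ : ℂ) = (g (circleMap z₀ r θ) * (circleMap 0 r θ * Complex.I)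
            + (starRingEnd ℂ) (g (circleMap z₀ r θ) * (circleMap 0 r θ * Complex.I))) / 2 := by
          rw [haddconj, hdre]
          push_cast
          ring
        rw [hdC]
        have hc0 : circleMap 0 r θ = (r:ℂ) * Complex.exp ((θ:ℂ) * Complex.I) := circleMap_zero r θ
        have hE : Complex.exp ((θ:ℂ) * Complex.I) ≠ 0 := Complex.exp_ne_zero _
        have hconjE : (starRingEnd ℂ) (Complex.exp ((θ:ℂ) * Complex.I))
            = (Complex.exp ((θ:ℂ) * Complex.I))⁻¹ := by
          rw [← Complex.exp_conj, ← Complex.exp_neg]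
          congr 1
          simp [map_mul, Complex.conj_I]
        have heE : e θ = (Complex.exp ((θ:ℂ) * Complex.I))⁻¹ := by
          simp only [he]
          rw [neg_mul, Complex.exp_neg]
        rw [heE, hc0]
        simp only [map_mul, map_pow, Complex.conj_I, Complex.conj_ofReal, hconjE]
        have hrne : (r:ℂ) ≠ 0 := by exact_mod_cast hr.ne'
        field_simp
        ring_nf
        simp only [Complex.I_sq]
        ring_nf
      rw [intervalIntegral.integral_congr (fun θ _ => hpt θ),
        intervalIntegral.integral_add, intervalIntegral.integral_const_mul,
        intervalIntegral.integral_const_mul, E1]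
      · have : (∫ θ in (0:ℝ)..(2*Real.pi),
            (starRingEnd ℂ) ((circleMap 0 r θ)^2 * g (circleMap z₀ r θ))) = 0 := by
          rw [conj_intervalIntegral, E2, map_zero]
        rw [this]
        push_cast
        ring
      · exact (continuous_const.mul hcontg).intervalIntegrable _ _
      · exact (continuous_const.mul ((Complex.continuous_conj.comp
          (((continuous_circleMap 0 r).pow 2).mul hcontg)))).intervalIntegrable _ _
    -- rewrite the integral of B
    have EB : (∫ θ in (0:ℝ)..(2*Real.pi),
        (u (circleMap z₀ r θ) : ℂ) * (Complex.I * (e θ * (-1 * Complex.I))))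
        = ∫ θ in (0:ℝ)..(2*Real.pi), (u (circleMap z₀ r θ) : ℂ) * e θ := by
      apply intervalIntegral.integral_congr
      intro θ _
      have : Complex.I * (e θ * (-1 * Complex.I)) = e θ := by
        rw [show Complex.I * (e θ * (-1 * Complex.I)) = -(e θ * (Complex.I*Complex.I)) by ring,
          Complex.I_mul_I]
        ring
      simp only [this]
    rw [EA, EB] at hzero
    have hkey : (∫ θ in (0:ℝ)..(2*Real.pi), (u (circleMap z₀ r θ) : ℂ) * e θ)
        = ((Real.pi * r : ℝ) : ℂ) * g z₀ := by
      linear_combination hzero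
    have hnorm : ‖∫ θ in (0:ℝ)..(2*Real.pi), (u (circleMap z₀ r θ) : ℂ) * e θ‖
        ≤ M * |2*Real.pi - 0| := by
      apply intervalIntegral.norm_integral_le_of_norm_le_const
      intro θ hθ
      have h1 : ‖e θ‖ = 1 := by
        simp [he, Complex.norm_exp]
      rw [norm_mul, h1, mul_one, Complex.norm_real, Real.norm_eq_abs]
      exact hM _ (hmem θ)
    rw [hkey, norm_mul, Complex.norm_real, Real.norm_eq_abs] at hnorm
    have hπ := Real.pi_pos
    rw [abs_of_pos (by positivity : (0:ℝ) < Real.pi * r)] at hnorm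
    rw [show |2*Real.pi - 0| = 2*Real.pi by rw [sub_zero]; exact abs_of_pos (by positivity)]
      at hnorm
    rw [le_div_iff₀ hr]
    nlinarith [norm_nonneg (g z₀)]
  -- let r → R
  have hlim : ‖g z₀‖ ≤ 2 * M / R := by
    have ht : Filter.Tendsto (fun r : ℝ => 2*M/r) (nhdsWithin R (Set.Iio R))
        (nhds (2*M/R)) :=
      (tendsto_const_nhds.div Filter.tendsto_id hR.ne').mono_left nhdsWithin_le_nhds
    refine ge_of_tendsto ht ?_
    filter_upwards [self_mem_nhdsWithin,
      (eventually_gt_nhds hR).filter_mono nhdsWithin_le_nhds] with r hr1 hr2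
    exact main r hr2 hr1
  have hre1 : (g z₀).re = fderiv ℝ u z₀ 1 := by simp [hg]
  have him1 : (g z₀).im = -(fderiv ℝ u z₀ Complex.I) := by simp [hg]
  constructor
  · calc |fderiv ℝ u z₀ 1| = |(g z₀).re| := by rw [hre1]
      _ ≤ ‖g z₀‖ := by exact Complex.abs_re_le_norm _
      _ ≤ _ := hlim
  · calc |fderiv ℝ u z₀ Complex.I| = |(g z₀).im| := by rw [him1, abs_neg]
      _ ≤ ‖g z₀‖ := by exact Complex.abs_im_le_norm _
      _ ≤ _ := hlim
end

section
/- Let X ⊂ ℂ be compact, t ∈ X, and let φ : C(X;ℂ) → ℂ be a unital positive linear functional (φ(1) = 1, φ(f) ≥ 0 for f ≥ 0) such that φ(h) = h(t) for every h in a subalgebra A ⊆ C(X;ℂ) containing the constants, and suppose every strictly positive f ∈ C(X;ℝ), f ≥ ε > 0, satisfies f(t) = sup{ |h(t)|² : h ∈ A, |h|² ≤ f on X }. Then φ(f) ≥ f(t) for every f ∈ C(X;ℝ) with f ≥ 0, and if additionally φ(1) = 1 forces equality on constants, then φ(f) = f(t) for all real f, i.e. φ is evaluation at t. -/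
set_option linter.unnecessarySimpa false

theorem stmt10 (X : Set ℂ) (hX : IsCompact X) (t : ℂ) (ht : t ∈ X)
    (A : Subalgebra ℂ C(X, ℂ))
    (φ : C(X, ℂ) →ₗ[ℂ] ℂ)
    (hφ1 : φ 1 = 1)
    (hpos : ∀ f : C(X, ℂ), (∀ x, ∃ r : ℝ, 0 ≤ r ∧ f x = r) →
      ∃ r : ℝ, 0 ≤ r ∧ φ f = r)
    (hA : ∀ h ∈ A, φ h = h ⟨t, ht⟩)
    (hpeak : ∀ f : C(X, ℂ), (∃ ε : ℝ, 0 < ε ∧ ∀ x, ∃ r : ℝ, ε ≤ r ∧ f x = r) →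
      IsLUB {r : ℝ | ∃ h ∈ A, (∀ x, ‖h x‖ ^ 2 ≤ (f x).re) ∧
        r = ‖h ⟨t, ht⟩‖ ^ 2} (f ⟨t, ht⟩).re) :
    (∀ f : C(X, ℂ), (∀ x, ∃ r : ℝ, 0 ≤ r ∧ f x = r) → (f ⟨t, ht⟩).re ≤ (φ f).re) ∧
    (∀ f : C(X, ℂ), (∀ x, (f x).im = 0) → φ f = f ⟨t, ht⟩) := by
  haveI : CompactSpace X := isCompact_iff_compactSpace.mp hX
  -- φ is real on real-valued functions
  have φreal : ∀ g : C(X, ℂ), (∀ x, (g x).im = 0) → ∃ r : ℝ, φ g = r := by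
    intro g hg
    set u : C(X, ℝ) := ⟨fun x => (g x).re, by fun_prop⟩ with hu
    set oR : C(ℝ, ℂ) := ⟨fun r => (r : ℂ), by fun_prop⟩ with hoR
    have hg1 : g = oR.comp (u ⊔ 0) - oR.comp ((-u) ⊔ 0) := by
      ext x
      apply Complex.ext
      · simpa [oR, u] using (max_zero_sub_max_neg_zero_eq_self (g x).re).symm
      · simp [oR, u, hg x]
    obtain ⟨r1, _, hr1⟩ := hpos (oR.comp (u ⊔ 0))
      (fun x => ⟨max ((g x).re) 0, le_max_right _ _, by simp [oR, u]⟩)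
    obtain ⟨r2, _, hr2⟩ := hpos (oR.comp ((-u) ⊔ 0))
      (fun x => ⟨max (-(g x).re) 0, le_max_right _ _, by simp [oR, u]⟩)
    exact ⟨r1 - r2, by rw [hg1, map_sub, hr1, hr2]; push_cast; ring⟩
  -- φ commutes with star
  have φstar : ∀ h : C(X, ℂ), φ (star h) = starRingEnd ℂ (φ h) := by
    intro h
    set u' : C(X, ℂ) := ⟨fun x => ((h x).re : ℂ), by fun_prop⟩ with hu'
    set v' : C(X, ℂ) := ⟨fun x => ((h x).im : ℂ), by fun_prop⟩ with hv'
    have h1 : h = u' + Complex.I • v' := by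
      ext x
      simp only [ContinuousMap.add_apply, ContinuousMap.smul_apply, smul_eq_mul,
        ContinuousMap.coe_mk, u', v']
      rw [mul_comm, Complex.re_add_im]
    have h2 : star h = u' - Complex.I • v' := by
      ext x
      simp only [ContinuousMap.star_apply, ContinuousMap.sub_apply,
        ContinuousMap.smul_apply, smul_eq_mul, ContinuousMap.coe_mk, u', v',
        Complex.star_def]
      apply Complex.ext <;> simp
    obtain ⟨r1, hr1⟩ := φreal u' (fun x => by simp [u'])
    obtain ⟨r2, hr2⟩ := φreal v' (fun x => by simp [v'])
    rw [h2, map_sub, map_smul, hr1, hr2]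
    rw [h1, map_add, map_smul, hr1, hr2]
    simp [smul_eq_mul, map_add, map_mul, Complex.conj_ofReal, Complex.conj_I]
    ring
  have part1 : ∀ f : C(X, ℂ), (∀ x, ∃ r : ℝ, 0 ≤ r ∧ f x = r) →
      (f ⟨t, ht⟩).re ≤ (φ f).re := by
    intro f hf
    set g : C(X, ℂ) := f + 1 with hg
    have hlub := hpeak g ⟨1, one_pos, fun x => by
      obtain ⟨r, hr0, hrx⟩ := hf x
      exact ⟨r + 1, by linarith, by simp [g, hrx]⟩⟩
    have hub : ∀ r ∈ {r : ℝ | ∃ h ∈ A, (∀ x, ‖h x‖ ^ 2 ≤ (g x).re) ∧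
        r = ‖h ⟨t, ht⟩‖ ^ 2}, r ≤ (φ g).re := by
      rintro r ⟨h, hhA, hhle, rfl⟩
      set c : ℂ := h ⟨t, ht⟩ with hc
      have hφh : φ h = c := hA h hhA
      have hpexp : (h - ContinuousMap.const X c) * star (h - ContinuousMap.const X c)
          = h * star h - (starRingEnd ℂ c) • h - c • star h + (c * starRingEnd ℂ c) • 1 := by
        ext x
        simp [Complex.star_def, map_sub, mul_comm]
        ring
      obtain ⟨r0, hr00, hr0⟩ := hpos ((h - ContinuousMap.const X c) * star (h - ContinuousMap.const X c))
        (fun x => ⟨Complex.normSq (h x - c), Complex.normSq_nonneg _, by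
          simp only [ContinuousMap.mul_apply, ContinuousMap.star_apply,
            ContinuousMap.sub_apply, ContinuousMap.const_apply, Complex.star_def,
            Complex.mul_conj]⟩)
      have hφp : φ (h * star h) = (r0 : ℂ) + c * starRingEnd ℂ c := by
        have e1 : φ ((h - ContinuousMap.const X c) * star (h - ContinuousMap.const X c))
            = φ (h * star h) - c * starRingEnd ℂ c := by
          rw [hpexp, map_add, map_sub, map_sub, map_smul, map_smul, map_smul, hφ1,
            hφh, φstar h, hφh]
          simp [smul_eq_mul]
          ring
        rw [hr0] at e1
        linear_combination -e1
      obtain ⟨r1, hr10, hr1⟩ := hpos (g - h * star h)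
        (fun x => ⟨(g x).re - Complex.normSq (h x), by
          have := hhle x
          rw [Complex.sq_norm] at this
          linarith, by
          apply Complex.ext
          · simp [Complex.mul_conj, Complex.star_def]
          · obtain ⟨r, hr0', hrx⟩ := hf x
            simp [g, Complex.mul_conj, Complex.star_def, hrx]⟩)
      have hφg : φ g = (r1 : ℂ) + (r0 : ℂ) + c * starRingEnd ℂ c := by
        have : φ (g - h * star h) = φ g - φ (h * star h) := map_sub _ _ _
        rw [hr1, hφp] at this
        linear_combination -this
      have : (φ g).re = r1 + r0 + Complex.normSq c := by
        rw [hφg, Complex.mul_conj]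
        simp
      rw [this, Complex.sq_norm]
      linarith
    have key := hlub.2 hub
    have e1 : (g ⟨t, ht⟩).re = (f ⟨t, ht⟩).re + 1 := by simp [g]
    have e2 : (φ g).re = (φ f).re + 1 := by
      rw [hg, map_add, hφ1]; simp
    rw [e1, e2] at key
    linarith
  refine ⟨part1, ?_⟩
  intro f hf
  set M : ℝ := ‖f‖ with hM
  have hb : ∀ x : X, -M ≤ (f x).re := by
    intro x
    have h1 : ‖f x‖ ≤ M := by
      simpa using f.norm_coe_le_norm x
    have h2 := Complex.abs_re_le_norm (f x)
    have := abs_le.mp (le_trans h2 h1)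
    linarith [this.1]
  have key1 : (f ⟨t, ht⟩).re ≤ (φ f).re := by
    have := part1 (f + (M : ℂ) • 1) (fun x => ⟨(f x).re + M, by linarith [hb x], by
      apply Complex.ext <;> simp [hf x]⟩)
    have e1 : φ (f + (M : ℂ) • 1) = φ f + (M : ℂ) := by
      rw [map_add, map_smul, hφ1, smul_eq_mul, mul_one]
    rw [e1] at this
    simp at this
    linarith
  have key2 : (φ f).re ≤ (f ⟨t, ht⟩).re := by
    have := part1 (-f + (M : ℂ) • 1) (fun x => ⟨-(f x).re + M, by
      have h1 : ‖f x‖ ≤ M := by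
        simpa using f.norm_coe_le_norm x
      have := abs_le.mp (le_trans (Complex.abs_re_le_norm (f x)) h1)
      linarith [this.2], by
      apply Complex.ext <;> simp [hf x]⟩)
    have e1 : φ (-f + (M : ℂ) • 1) = -φ f + (M : ℂ) := by
      rw [map_add, map_neg, map_smul, hφ1, smul_eq_mul, mul_one]
    rw [e1] at this
    simp at this
    linarith
  obtain ⟨r, hr⟩ := φreal f hf
  apply Complex.ext
  · linarith
  · rw [hr, hf ⟨t, ht⟩]
    simp
end

section
/- Let X be a compact Hausdorff space and A ⊆ C(X;ℂ) a closed subalgebra containing the constants such that for every t ∈ X there exists h ∈ A with |h(t)| = ‖h‖∞ = 1 and |h(s)| < 1 for all s ≠ t (every point is a peak point). Then for every f ∈ C(X;ℝ) with f ≥ ε > 0 and every t ∈ X there exists h ∈ A with |h|² ≤ f on X and |h(t)|² = f(t). -/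
open Filter Topology

theorem stmt11 (X : Type*) [TopologicalSpace X] [CompactSpace X] [T2Space X]
    (A : Subalgebra ℂ C(X, ℂ)) (hA : IsClosed (A : Set C(X, ℂ)))
    (hpeak : ∀ t : X, ∃ h ∈ A, ‖h‖ = 1 ∧ ‖h t‖ = 1 ∧
      ∀ s, s ≠ t → ‖h s‖ < 1) :
    ∀ (f : C(X, ℝ)) (ε : ℝ), 0 < ε → (∀ x, ε ≤ f x) → ∀ t : X,
      ∃ h ∈ A, (∀ x, ‖h x‖ ^ 2 ≤ f x) ∧ ‖h t‖ ^ 2 = f t := by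
  intro f ε hε hεf t
  obtain ⟨k, hkA, hknorm, hkt, hks⟩ := hpeak t
  have hft : 0 < f t := lt_of_lt_of_le hε (hεf t)
  -- normalized peak function
  set k' : C(X, ℂ) := (starRingEnd ℂ) (k t) • k with hk'def
  have hk'A : k' ∈ A := A.smul_mem hkA _
  have hk't : k' t = 1 := by
    simp only [hk'def, ContinuousMap.smul_apply, smul_eq_mul]
    rw [← Complex.normSq_eq_conj_mul_self]
    rw [Complex.normSq_eq_norm_sq, hkt]
    norm_num
  have hk'abs : ∀ s, ‖k' s‖ = ‖k s‖ := by
    intro s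
    simp [hk'def, map_mul, hkt]
  have hk'le : ∀ s, ‖k' s‖ ≤ 1 := by
    intro s
    rw [hk'abs s]
    calc ‖k s‖ = ‖k s‖ := rfl
    _ ≤ ‖k‖ := k.norm_coe_le_norm s
    _ = 1 := hknorm
  have hk'lt : ∀ s, s ≠ t → ‖k' s‖ < 1 := fun s hs => (hk'abs s) ▸ hks s hs
  -- neighborhoods
  set U : ℕ → Set X := fun n => {x | f t * (1 - (2:ℝ)⁻¹ ^ (n + 2)) < f x} with hUdef
  have hUopen : ∀ n, IsOpen (U n) := fun n => isOpen_lt continuous_const f.continuous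
  have htU : ∀ n, t ∈ U n := by
    intro n
    simp only [hUdef, Set.mem_setOf_eq]
    nlinarith [pow_pos (by norm_num : (0:ℝ) < 2⁻¹) (n + 2)]
  have hUanti : ∀ m n, m ≤ n → U n ⊆ U m := by
    intro m n hmn x hx
    simp only [hUdef, Set.mem_setOf_eq] at hx ⊢
    have : (2:ℝ)⁻¹ ^ (n + 2) ≤ (2:ℝ)⁻¹ ^ (m + 2) :=
      pow_le_pow_of_le_one (by norm_num) (by norm_num) (by omega)
    nlinarith
  -- small parameter
  set δ : ℝ := min 2⁻¹ (Real.sqrt (ε / f t)) with hδdef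
  have hδpos : 0 < δ := lt_min (by norm_num) (Real.sqrt_pos.2 (div_pos hε hft))
  have hδhalf : δ ≤ 2⁻¹ := min_le_left _ _
  have hδε : f t * δ ^ 2 ≤ ε := by
    have h1 : δ ^ 2 ≤ Real.sqrt (ε / f t) ^ 2 := by
      apply pow_le_pow_left₀ hδpos.le (min_le_right _ _)
    rw [Real.sq_sqrt (le_of_lt (div_pos hε hft))] at h1
    calc f t * δ ^ 2 ≤ f t * (ε / f t) := by nlinarith
    _ = ε := by field_simp
  -- concentrated peaks
  have hg : ∀ n : ℕ, ∃ g ∈ A, g t = 1 ∧ (∀ x, ‖g x‖ ≤ 1) ∧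
      ∀ x ∉ U n, ‖g x‖ ≤ δ := by
    intro n
    by_cases hK : ((U n)ᶜ : Set X).Nonempty
    · have hKcpt : IsCompact ((U n)ᶜ : Set X) := (hUopen n).isClosed_compl.isCompact
      obtain ⟨x₀, hx₀, hmax⟩ := hKcpt.exists_isMaxOn hK
        ((continuous_norm.comp k'.continuous).continuousOn)
      have hx₀t : x₀ ≠ t := fun h => hx₀ (h ▸ htU n)
      have hc1 : ‖k' x₀‖ < 1 := hk'lt x₀ hx₀t
      obtain ⟨m, hm⟩ := exists_pow_lt_of_lt_one hδpos hc1
      refine ⟨k' ^ m, pow_mem hk'A m, ?_, ?_, ?_⟩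
      · simp [hk't]
      · intro x
        simp only [ContinuousMap.pow_apply, norm_pow]
        exact pow_le_one₀ (norm_nonneg _) (hk'le x)
      · intro x hx
        simp only [ContinuousMap.pow_apply, norm_pow]
        calc ‖k' x‖ ^ m ≤ ‖k' x₀‖ ^ m :=
              pow_le_pow_left₀ (norm_nonneg _) (hmax hx) m
        _ ≤ δ := hm.le
    · refine ⟨1, one_mem A, rfl, by simp, fun x hx => absurd ?_ hK⟩
      exact ⟨x, hx⟩
  choose g hgA hgt hg1 hgδ using hg
  -- the series
  set c₀ : ℝ := Real.sqrt (f t) with hc₀def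
  have hc₀pos : 0 < c₀ := Real.sqrt_pos.2 hft
  set a : ℕ → ℝ := fun n => (2:ℝ)⁻¹ ^ (n + 1) with hadef
  have hapos : ∀ n, 0 < a n := fun n => pow_pos (by norm_num) _
  have haSum : HasSum a 1 := by
    have := (hasSum_geometric_of_lt_one (r := (2:ℝ)⁻¹) (by norm_num) (by norm_num)).mul_right 2⁻¹
    have h2 : (1 - (2:ℝ)⁻¹)⁻¹ * 2⁻¹ = 1 := by norm_num
    rw [h2] at this
    have heq : a = fun n => (2:ℝ)⁻¹ ^ n * 2⁻¹ := by
      funext n; simp only [hadef]; rw [pow_succ]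
    rw [heq]; exact this
  set F : ℕ → C(X, ℂ) := fun n => ((c₀ * a n : ℝ) : ℂ) • g n with hFdef
  have hFnorm : ∀ n, ‖F n‖ ≤ c₀ * a n := by
    intro n
    rw [hFdef]
    simp only [norm_smul]
    have h1 : ‖((c₀ * a n : ℝ) : ℂ)‖ = c₀ * a n := by
      rw [Complex.norm_real, Real.norm_of_nonneg (by positivity)]
    rw [h1]
    nth_rewrite 2 [← mul_one (c₀ * a n)]
    apply mul_le_mul_of_nonneg_left _ (by positivity)
    exact (ContinuousMap.norm_le _ zero_le_one).2 fun x => hg1 n x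
  have hcaSum : Summable (fun n => c₀ * a n) := (haSum.summable).mul_left c₀
  have hFsum : Summable F := Summable.of_norm_bounded hcaSum hFnorm
  have hHasSum : HasSum F (∑' n, F n) := hFsum.hasSum
  set h : C(X, ℂ) := ∑' n, F n with hhdef
  have hhA : h ∈ A := by
    refine hA.mem_of_tendsto hHasSum.tendsto_sum_nat (Filter.Eventually.of_forall fun n => ?_)
    exact sum_mem fun i _ => A.smul_mem (hgA i) _
  -- pointwise sums
  have hHx : ∀ x, HasSum (fun n => ((c₀ * a n : ℝ) : ℂ) * g n x) (h x) := by
    intro x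
    have := hHasSum.mapL (ContinuousMap.evalCLM ℂ x)
    convert this using 1
    all_goals rfl
  have hsummable_abs : ∀ x, Summable (fun n => c₀ * a n * ‖g n x‖) := by
    intro x
    apply Summable.of_nonneg_of_le (fun n => by positivity) _ hcaSum
    intro n
    nth_rewrite 2 [← mul_one (c₀ * a n)]
    exact mul_le_mul_of_nonneg_left (hg1 n x) (by positivity)
  have habs_le : ∀ x, ‖h x‖ ≤ ∑' n, c₀ * a n * ‖g n x‖ := by
    intro x
    calc ‖h x‖ = ‖h x‖ := rfl
    _ = ‖∑' n, ((c₀ * a n : ℝ) : ℂ) * g n x‖ := by rw [(hHx x).tsum_eq]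
    _ ≤ ∑' n, ‖((c₀ * a n : ℝ) : ℂ) * g n x‖ := by
        apply norm_tsum_le_tsum_norm
        apply Summable.of_nonneg_of_le (fun n => norm_nonneg _) _ (hsummable_abs x)
        intro n
        rw [norm_mul, Complex.norm_real, Real.norm_of_nonneg (by positivity)]
    _ = ∑' n, c₀ * a n * ‖g n x‖ := by
        congr 1; funext n
        rw [norm_mul, Complex.norm_real, Real.norm_of_nonneg (by positivity)]
  -- value at t
  have hht : h t = (c₀ : ℂ) := by
    have h1 : HasSum (fun n => ((c₀ * a n : ℝ) : ℂ)) ((c₀ : ℝ) : ℂ) := by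
      have := ((haSum.mul_left c₀).mapL Complex.ofRealCLM)
      simpa using this
    have h2 : HasSum (fun n => ((c₀ * a n : ℝ) : ℂ) * g n t) ((c₀ : ℝ) : ℂ) := by
      convert h1 using 2 with n
      rw [hgt n, mul_one]
    exact (hHx t).unique h2
  -- the bound for points eventually outside U
  have key : ∀ (x : X) (N : ℕ), (∀ n, N ≤ n → ‖g n x‖ ≤ δ) →
      ‖h x‖ ≤ c₀ * (1 - (2:ℝ)⁻¹ ^ N) + c₀ * δ * (2:ℝ)⁻¹ ^ N := by
    intro x N hN
    have hfin : ∀ M : ℕ, ∑ n ∈ Finset.range M, a n = 1 - (2:ℝ)⁻¹ ^ M := by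
      intro M
      induction M with
      | zero => simp
      | succ M ih =>
        rw [Finset.sum_range_succ, ih]
        simp only [hadef]
        rw [pow_succ]
        ring
    have htail : HasSum (fun n => a (n + N)) ((2:ℝ)⁻¹ ^ N) := by
      have := haSum.mul_right ((2:ℝ)⁻¹ ^ N)
      rw [one_mul] at this
      have heq : (fun n => a (n + N)) = fun n => a n * (2:ℝ)⁻¹ ^ N := by
        funext n
        simp only [hadef]
        rw [show n + N + 1 = (n + 1) + N from by omega, pow_add]
      rw [heq]; exact this
    calc ‖h x‖ ≤ ∑' n, c₀ * a n * ‖g n x‖ := habs_le x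
    _ = ∑ n ∈ Finset.range N, c₀ * a n * ‖g n x‖
        + ∑' n, c₀ * a (n + N) * ‖g (n + N) x‖ := by
        rw [← (hsummable_abs x).sum_add_tsum_nat_add N]
    _ ≤ ∑ n ∈ Finset.range N, c₀ * a n + ∑' n, c₀ * a (n + N) * δ := by
        apply add_le_add
        · apply Finset.sum_le_sum
          intro n _
          nth_rewrite 2 [← mul_one (c₀ * a n)]
          exact mul_le_mul_of_nonneg_left (hg1 n x) (by positivity)
        · apply Summable.tsum_le_tsum
          · intro n
            exact mul_le_mul_of_nonneg_left (hN (n + N) (Nat.le_add_left N n)) (by positivity)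
          · exact (hsummable_abs x).comp_injective (add_left_injective N)
          · exact ((htail.summable).mul_left c₀).mul_right δ
    _ = c₀ * (1 - (2:ℝ)⁻¹ ^ N) + c₀ * δ * (2:ℝ)⁻¹ ^ N := by
        rw [← Finset.mul_sum, hfin N]
        congr 1
        have : HasSum (fun n => c₀ * a (n + N) * δ) (c₀ * ((2:ℝ)⁻¹ ^ N) * δ) := by
          have := (htail.mul_left c₀).mul_right δ
          convert this using 2 with n
        rw [this.tsum_eq]
        ring
  refine ⟨h, hhA, ?_, ?_⟩
  · -- the inequality
    intro x
    by_cases hx : ∀ n, x ∈ U n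
    · -- f x ≥ f t
      have hfx : f t ≤ f x := by
        have hlim : Tendsto (fun n : ℕ => f t * (1 - (2:ℝ)⁻¹ ^ (n + 2))) atTop
            (𝓝 (f t * (1 - 0))) := by
          apply tendsto_const_nhds.mul (tendsto_const_nhds.sub _)
          exact (tendsto_pow_atTop_nhds_zero_of_lt_one (by norm_num) (by norm_num)).comp
            (tendsto_add_atTop_nat 2)
        rw [mul_sub, mul_zero, sub_zero, mul_one] at hlim
        exact le_of_tendsto hlim (Filter.Eventually.of_forall fun n => (hx n).le)
      have hb : ‖h x‖ ≤ c₀ := by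
        calc ‖h x‖ ≤ ∑' n, c₀ * a n * ‖g n x‖ := habs_le x
        _ ≤ ∑' n, c₀ * a n := by
            apply Summable.tsum_le_tsum _ (hsummable_abs x) hcaSum
            intro n
            nth_rewrite 2 [← mul_one (c₀ * a n)]
            exact mul_le_mul_of_nonneg_left (hg1 n x) (by positivity)
        _ = c₀ := by rw [(haSum.mul_left c₀).tsum_eq, mul_one]
      calc ‖h x‖ ^ 2 ≤ c₀ ^ 2 := by
            apply pow_le_pow_left₀ (norm_nonneg _) hb
      _ = f t := Real.sq_sqrt hft.le
      _ ≤ f x := hfx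
    · push_neg at hx
      have hNex : ∃ N, x ∉ U N := hx
      obtain ⟨N, hxN, hNmin⟩ : ∃ N, x ∉ U N ∧ ∀ m, m < N → x ∈ U m := by
        refine ⟨Nat.find hNex, Nat.find_spec hNex, fun m hm => ?_⟩
        exact not_not.mp ((Nat.lt_find_iff hNex m).mp hm m le_rfl)
      have hout : ∀ n, N ≤ n → ‖g n x‖ ≤ δ := by
        intro n hn
        exact hgδ n x (fun hmem => hxN (hUanti N n hn hmem))
      have hb := key x N hout
      rcases Nat.eq_zero_or_pos N with hN0 | hNpos
      · subst hN0
        simp only [pow_zero, sub_self, mul_zero, zero_add, mul_one] at hb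
        calc ‖h x‖ ^ 2 ≤ (c₀ * δ) ^ 2 := by
              apply pow_le_pow_left₀ (norm_nonneg _) hb
        _ = f t * δ ^ 2 := by rw [mul_pow, Real.sq_sqrt hft.le]
        _ ≤ ε := hδε
        _ ≤ f x := hεf x
      · obtain ⟨M, rfl⟩ := Nat.exists_eq_succ_of_ne_zero hNpos.ne'
        have hxM : x ∈ U M := hNmin M (Nat.lt_succ_self M)
        have hfxM : f t * (1 - (2:ℝ)⁻¹ ^ (M + 2)) < f x := hxM
        have hb2 : ‖h x‖ ≤ c₀ * (1 - (2:ℝ)⁻¹ ^ (M + 2)) := by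
          refine hb.trans ?_
          have hu : (0:ℝ) < (2:ℝ)⁻¹ ^ (M + 1) := pow_pos (by norm_num) _
          have hsp : (2:ℝ)⁻¹ ^ (M + 2) = (2:ℝ)⁻¹ ^ (M + 1) * 2⁻¹ := by rw [pow_succ]
          have hprod : c₀ * (2:ℝ)⁻¹ ^ (M + 1) * δ ≤ c₀ * (2:ℝ)⁻¹ ^ (M + 1) * 2⁻¹ :=
            mul_le_mul_of_nonneg_left hδhalf (mul_pos hc₀pos hu).le
          rw [hsp]
          simp only [Nat.succ_eq_add_one]
          nlinarith [hprod]
        have hle1 : (0:ℝ) ≤ 1 - (2:ℝ)⁻¹ ^ (M + 2) := by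
          have : (2:ℝ)⁻¹ ^ (M + 2) ≤ 1 := pow_le_one₀ (by norm_num) (by norm_num)
          linarith
        calc ‖h x‖ ^ 2 ≤ (c₀ * (1 - (2:ℝ)⁻¹ ^ (M + 2))) ^ 2 :=
              pow_le_pow_left₀ (norm_nonneg _) hb2 2
        _ = f t * (1 - (2:ℝ)⁻¹ ^ (M + 2)) ^ 2 := by rw [mul_pow, Real.sq_sqrt hft.le]
        _ ≤ f t * (1 - (2:ℝ)⁻¹ ^ (M + 2)) := by
            apply mul_le_mul_of_nonneg_left _ hft.le
            have hv : (0:ℝ) < (2:ℝ)⁻¹ ^ (M + 2) := pow_pos (by norm_num) _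
            nlinarith [mul_nonneg hle1 hv.le]
        _ ≤ f x := hfxM.le
  · rw [hht]
    rw [Complex.norm_real, Real.norm_of_nonneg hc₀pos.le]
    exact Real.sq_sqrt hft.le
end
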